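/- arXiv:2504.08737 — 3 statements merged into one kernel-verified Lean document; each statement's English description precedes it below -/
import Mathlib

section
/- Fix a run of LAMDLS-2 abstracted as follows: each agent has a step counter, and an agent A_i with step counter k may only replace its assignment when every neighbor ordered before it (in PC(i)) has step counter k+1 and every neighbor ordered after it (in FC(i)) has step counter k; after a replacement, A_i's counter becomes k+1. Then no two neighboring agents replace assignments at the same step-counter value simultaneously: if A_i replaces its assignment at counter k, then during that replacement every neighbor's counter is fixed (either k or k+1) and no neighbor replaces its assignment concurrently. -/
/-- `v` may replace its assignment: every neighbor ordered before `v` (smaller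
color) has counter `sc v + 1` and every neighbor ordered after `v` (larger
color) has counter `sc v`. -/
def CanReplace {V : Type*} (G : SimpleGraph V) (co : V → ℕ) (sc : V → ℕ)
    (v : V) : Prop :=
  (∀ u, G.Adj u v → co u < co v → sc u = sc v + 1) ∧
  (∀ u, G.Adj u v → co v < co u → sc u = sc v)

/-- in the LAMDLS-2 counter model with a proper coloring, two
adjacent agents can never both satisfy their replacement preconditions
simultaneously, so neighbors never replace assignments concurrently. -/
theorem stmt10 {V : Type*} (G : SimpleGraph V) (co : V → ℕ)
    (hproper : ∀ u v, G.Adj u v → co u ≠ co v)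
    (sc : V → ℕ) (u v : V) (huv : G.Adj u v) :
    ¬ (CanReplace G co sc u ∧ CanReplace G co sc v) := by
  rintro ⟨⟨hu1, hu2⟩, ⟨hv1, hv2⟩⟩
  rcases lt_or_gt_of_ne (hproper u v huv) with h | h
  · have h1 := hv1 u huv h
    have h2 := hu2 v huv.symm h
    omega
  · have h1 := hu1 v huv.symm h
    have h2 := hv2 u huv h
    omega
end

section
/- For a finite graph G and any matching M together with a set S of vertices not covered by M, consider the update in which each matched pair jointly selects a cost-non-increasing joint best response and each vertex in S selects a cost-non-increasing unilateral best response, such that no two updating units (pairs in M or singletons in S) are adjacent in G... if additionally the units are pairwise non-adjacent (no edge between any two distinct units), then the total change in global cost equals the sum of the individual units' local gains, and the global cost does not increase. -/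
open Finset

/-- Global cost of a complete assignment in a binary DCOP: each symmetric binary
constraint is counted once (the directed sum over neighbors counts it twice). -/
noncomputable def globalCost {V D : Type*} [Fintype V] (G : SimpleGraph V)
    [DecidableRel G.Adj] (R : V → V → D → D → ℝ) (σ : V → D) : ℝ :=
  (∑ i, ∑ j ∈ G.neighborFinset i, R i j (σ i) (σ j)) / 2

/-- Pair-local cost of a pair of neighboring agents `(i, j)`: the constraint
between them, plus the constraints between `i` and its other neighbors, plus
the constraints between `j` and its other neighbors. -/
noncomputable def pairLocalCost {V D : Type*} [Fintype V] [DecidableEq V]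
    (G : SimpleGraph V) [DecidableRel G.Adj] (R : V → V → D → D → ℝ)
    (i j : V) (σ : V → D) : ℝ :=
  R i j (σ i) (σ j) + ∑ k ∈ G.neighborFinset i \ {j}, R i k (σ i) (σ k)
    + ∑ k ∈ G.neighborFinset j \ {i}, R j k (σ j) (σ k)

/-- Local cost of agent `i`: sum of costs of the constraints incident to `i`. -/
noncomputable def localCost {V D : Type*} [Fintype V] (G : SimpleGraph V)
    [DecidableRel G.Adj] (R : V → V → D → D → ℝ) (i : V) (σ : V → D) : ℝ :=
  ∑ j ∈ G.neighborFinset i, R i j (σ i) (σ j)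

/-! Write `Δ i j` for the change of the directed constraint `R i j`; it is symmetric and vanishes
unless an endpoint updates. Twice the global change is the sum of `Δ` over ordered edges. An
ordered edge entering the set `U` of updating vertices from outside has the same `Δ` as its
reverse, so the total is the sum over `i ∈ U` of twice the change of `i`'s local cost minus
the `Δ i j` with `j` a neighbour of `i` in `U`.
As units are non-adjacent, the only neighbour in `U` of a matched vertex is its partner, and of
a singleton there is none; since a pair's local cost is the sum of its two local costs minus the
shared constraint, each unit contributes exactly twice its own local change. -/

namespace SimpleGraph

variable {V : Type*} [Fintype V] [DecidableEq V] (G : SimpleGraph V) [DecidableRel G.Adj]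

theorem sum_sum_neighborFinset_eq_of_eq_zero {β : Type*} [CommRing β] (U : Finset V)
    (f : V → V → β) (hf : ∀ i j, f i j = f j i) (h0 : ∀ i ∉ U, ∀ j ∉ U, f i j = 0) :
    ∑ i, ∑ j ∈ G.neighborFinset i, f i j =
      ∑ i ∈ U, (2 * ∑ j ∈ G.neighborFinset i, f i j - ∑ j ∈ G.neighborFinset i ∩ U, f i j) := by
  have split : ∀ i, ∑ j ∈ G.neighborFinset i, f i j =
      ∑ j ∈ G.neighborFinset i with j ∈ U, f i j + ∑ j ∈ G.neighborFinset i with j ∉ U, f i j :=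
    fun i => (sum_filter_add_sum_filter_not _ _ _).symm
  have outside : ∀ i ∉ U, ∑ j ∈ G.neighborFinset i, f i j =
      ∑ j ∈ G.neighborFinset i with j ∈ U, f i j := fun i hi => by
    rw [split, sum_eq_zero fun j hj => h0 i hi j (mem_filter.1 hj).2, add_zero]
  have leaving : ∑ i ∈ Uᶜ, ∑ j ∈ G.neighborFinset i with j ∈ U, f i j =
      ∑ i ∈ U, ∑ j ∈ G.neighborFinset i with j ∉ U, f i j := by
    rw [sum_comm' (t' := U) (s' := fun j => {i ∈ G.neighborFinset j | i ∉ U})]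
    · exact sum_congr rfl fun i _ => sum_congr rfl fun j _ => hf j i
    · intro i j
      simp only [mem_compl, mem_filter, mem_neighborFinset]
      exact ⟨fun ⟨hi, hij, hj⟩ => ⟨⟨hij.symm, hi⟩, hj⟩, fun ⟨⟨hji, hi⟩, hj⟩ => ⟨hi, hji.symm, hj⟩⟩
  rw [← sum_add_sum_compl U, sum_congr rfl fun i hi => outside i (mem_compl.1 hi), leaving,
    ← sum_add_distrib]
  refine sum_congr rfl fun i _ => ?_
  rw [split, filter_mem_eq_inter]
  ring

end SimpleGraph

section Costs

variable {V D : Type*} [Fintype V] (G : SimpleGraph V) [DecidableRel G.Adj]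
  (R : V → V → D → D → ℝ)

theorem localCost_sub_localCost (i : V) (σ σ' : V → D) :
    localCost G R i σ' - localCost G R i σ =
      ∑ j ∈ G.neighborFinset i, (R i j (σ' i) (σ' j) - R i j (σ i) (σ j)) :=
  (sum_sub_distrib ..).symm

theorem two_mul_globalCost_sub_globalCost (σ σ' : V → D) :
    2 * (globalCost G R σ' - globalCost G R σ) =
      ∑ i, ∑ j ∈ G.neighborFinset i, (R i j (σ' i) (σ' j) - R i j (σ i) (σ j)) := by
  simp only [globalCost, sum_sub_distrib]
  ring

theorem pairLocalCost_eq [DecidableEq V] {i j : V} (hij : G.Adj i j) (σ : V → D) :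
    pairLocalCost G R i j σ =
      localCost G R i σ + localCost G R j σ - R j i (σ j) (σ i) := by
  have hj : j ∈ G.neighborFinset i := (G.mem_neighborFinset i j).2 hij
  have hi : i ∈ G.neighborFinset j := (G.mem_neighborFinset j i).2 hij.symm
  rw [pairLocalCost, localCost, localCost, sum_eq_sum_sdiff_singleton_add hj,
    sum_eq_sum_sdiff_singleton_add hi]
  ring

end Costs

section Units

variable {V : Type*} {G : SimpleGraph V} {M : Finset (V × V)} {S : Finset V}

theorem ne_fst_and_ne_snd_of_mem_singletons (hM : ∀ p ∈ M, G.Adj p.1 p.2)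
    (hMS : ∀ p ∈ M, ∀ v ∈ S, ¬ G.Adj v p.1 ∧ ¬ G.Adj v p.2) {v : V} (hv : v ∈ S) {p : V × V}
    (hp : p ∈ M) : v ≠ p.1 ∧ v ≠ p.2 := by
  constructor <;> rintro rfl
  · exact (hMS p hp _ hv).2 (hM p hp)
  · exact (hMS p hp _ hv).1 (hM p hp).symm

theorem ends_ne_of_mem_matching (hM : ∀ p ∈ M, G.Adj p.1 p.2)
    (hMM : ∀ p ∈ M, ∀ q ∈ M, p ≠ q →
      ¬ G.Adj p.1 q.1 ∧ ¬ G.Adj p.1 q.2 ∧ ¬ G.Adj p.2 q.1 ∧ ¬ G.Adj p.2 q.2)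
    {p q : V × V} (hp : p ∈ M) (hq : q ∈ M) (hpq : p ≠ q) :
    p.1 ≠ q.1 ∧ p.1 ≠ q.2 ∧ p.2 ≠ q.1 ∧ p.2 ≠ q.2 := by
  obtain ⟨h11, h12, -, -⟩ := hMM p hp q hq hpq
  refine ⟨fun h => ?_, fun h => ?_, fun h => ?_, fun h => ?_⟩
  · exact h12 (h ▸ hM q hq)
  · exact h11 (h ▸ (hM q hq).symm)
  · exact h11 (h ▸ hM p hp)
  · exact h12 (h ▸ hM p hp)

variable [DecidableEq V]

def unitVertices (M : Finset (V × V)) (S : Finset V) : Finset V :=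
  S ∪ M.biUnion fun p => {p.1, p.2}

theorem mem_unitVertices {k : V} :
    k ∈ unitVertices M S ↔ k ∈ S ∨ ∃ p ∈ M, k = p.1 ∨ k = p.2 := by
  simp only [unitVertices, mem_union, mem_biUnion, mem_insert, mem_singleton]

theorem notMem_unitVertices {k : V} :
    k ∉ unitVertices M S ↔ k ∉ S ∧ ∀ p ∈ M, k ≠ p.1 ∧ k ≠ p.2 := by
  simp only [mem_unitVertices, not_or, not_exists, not_and]

theorem eq_fst_or_eq_snd_of_adj_of_mem_unitVertices
    (hMS : ∀ p ∈ M, ∀ v ∈ S, ¬ G.Adj v p.1 ∧ ¬ G.Adj v p.2)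
    (hMM : ∀ p ∈ M, ∀ q ∈ M, p ≠ q →
      ¬ G.Adj p.1 q.1 ∧ ¬ G.Adj p.1 q.2 ∧ ¬ G.Adj p.2 q.1 ∧ ¬ G.Adj p.2 q.2)
    {p : V × V} (hp : p ∈ M) {a j : V} (ha : a = p.1 ∨ a = p.2) (hj : j ∈ unitVertices M S)
    (haj : G.Adj a j) : j = p.1 ∨ j = p.2 := by
  rcases mem_unitVertices.1 hj with hjS | ⟨q, hq, hjq⟩
  · rcases ha with rfl | rfl
    exacts [((hMS p hp j hjS).1 haj.symm).elim, ((hMS p hp j hjS).2 haj.symm).elim]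
  · obtain rfl | hpq := eq_or_ne p q
    · exact hjq
    · obtain ⟨h11, h12, h21, h22⟩ := hMM p hp q hq hpq
      rcases ha with rfl | rfl <;> rcases hjq with rfl | rfl
      exacts [(h11 haj).elim, (h12 haj).elim, (h21 haj).elim, (h22 haj).elim]

theorem sum_unitVertices {β : Type*} [AddCommMonoid β] (hM : ∀ p ∈ M, G.Adj p.1 p.2)
    (hMS : ∀ p ∈ M, ∀ v ∈ S, ¬ G.Adj v p.1 ∧ ¬ G.Adj v p.2)
    (hMM : ∀ p ∈ M, ∀ q ∈ M, p ≠ q →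
      ¬ G.Adj p.1 q.1 ∧ ¬ G.Adj p.1 q.2 ∧ ¬ G.Adj p.2 q.1 ∧ ¬ G.Adj p.2 q.2)
    (f : V → β) :
    ∑ i ∈ unitVertices M S, f i = ∑ v ∈ S, f v + ∑ p ∈ M, (f p.1 + f p.2) := by
  rw [unitVertices, sum_union, sum_biUnion]
  · exact congrArg _ (sum_congr rfl fun p hp => sum_pair (hM p hp).ne)
  · intro p hp q hq hpq
    obtain ⟨h11, h12, h21, h22⟩ := ends_ne_of_mem_matching hM hMM hp hq hpq
    simp only [Function.onFun, disjoint_insert_left, disjoint_insert_right, disjoint_singleton,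
      mem_insert, mem_singleton, not_or]
    exact ⟨⟨h11.symm, h21.symm⟩, h12, h22⟩
  · refine (disjoint_biUnion_right _ _ _).2 fun p hp => ?_
    simp only [disjoint_insert_right, disjoint_singleton_right]
    exact ⟨fun h => (ne_fst_and_ne_snd_of_mem_singletons hM hMS h hp).1 rfl,
      fun h => (ne_fst_and_ne_snd_of_mem_singletons hM hMS h hp).2 rfl⟩

variable [Fintype V] [DecidableRel G.Adj]

theorem neighborFinset_inter_unitVertices_of_mem_singletons
    (hMS : ∀ p ∈ M, ∀ v ∈ S, ¬ G.Adj v p.1 ∧ ¬ G.Adj v p.2)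
    (hSS : ∀ u ∈ S, ∀ v ∈ S, u ≠ v → ¬ G.Adj u v) {v : V} (hv : v ∈ S) :
    G.neighborFinset v ∩ unitVertices M S = ∅ := by
  refine eq_empty_of_forall_notMem fun j hj => ?_
  obtain ⟨hvj, hjU⟩ := mem_inter.1 hj
  rw [SimpleGraph.mem_neighborFinset] at hvj
  rcases mem_unitVertices.1 hjU with hjS | ⟨p, hp, rfl | rfl⟩
  · exact hSS v hv j hjS hvj.ne hvj
  · exact (hMS p hp v hv).1 hvj
  · exact (hMS p hp v hv).2 hvj

theorem neighborFinset_fst_inter_unitVertices (hM : ∀ p ∈ M, G.Adj p.1 p.2)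
    (hMS : ∀ p ∈ M, ∀ v ∈ S, ¬ G.Adj v p.1 ∧ ¬ G.Adj v p.2)
    (hMM : ∀ p ∈ M, ∀ q ∈ M, p ≠ q →
      ¬ G.Adj p.1 q.1 ∧ ¬ G.Adj p.1 q.2 ∧ ¬ G.Adj p.2 q.1 ∧ ¬ G.Adj p.2 q.2)
    {p : V × V} (hp : p ∈ M) : G.neighborFinset p.1 ∩ unitVertices M S = {p.2} := by
  ext j
  simp only [mem_inter, SimpleGraph.mem_neighborFinset, mem_singleton]
  constructor
  · rintro ⟨hadj, hj⟩
    exact (eq_fst_or_eq_snd_of_adj_of_mem_unitVertices hMS hMM hp (.inl rfl) hj hadj).resolve_left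
      hadj.ne'
  · rintro rfl
    exact ⟨hM p hp, mem_unitVertices.2 (.inr ⟨p, hp, .inr rfl⟩)⟩

theorem neighborFinset_snd_inter_unitVertices (hM : ∀ p ∈ M, G.Adj p.1 p.2)
    (hMS : ∀ p ∈ M, ∀ v ∈ S, ¬ G.Adj v p.1 ∧ ¬ G.Adj v p.2)
    (hMM : ∀ p ∈ M, ∀ q ∈ M, p ≠ q →
      ¬ G.Adj p.1 q.1 ∧ ¬ G.Adj p.1 q.2 ∧ ¬ G.Adj p.2 q.1 ∧ ¬ G.Adj p.2 q.2)
    {p : V × V} (hp : p ∈ M) : G.neighborFinset p.2 ∩ unitVertices M S = {p.1} := by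
  ext j
  simp only [mem_inter, SimpleGraph.mem_neighborFinset, mem_singleton]
  constructor
  · rintro ⟨hadj, hj⟩
    exact (eq_fst_or_eq_snd_of_adj_of_mem_unitVertices hMS hMM hp (.inr rfl) hj hadj).resolve_right
      hadj.ne'
  · rintro rfl
    exact ⟨(hM p hp).symm, mem_unitVertices.2 (.inr ⟨p, hp, .inl rfl⟩)⟩

end Units

theorem globalCost_sub_globalCost_eq_sum_units {V D : Type*} [Fintype V] [DecidableEq V]
    {G : SimpleGraph V} [DecidableRel G.Adj] {R : V → V → D → D → ℝ}
    (hsym : ∀ i j a b, R i j a b = R j i b a) {M : Finset (V × V)} {S : Finset V}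
    (hM : ∀ p ∈ M, G.Adj p.1 p.2)
    (hMM : ∀ p ∈ M, ∀ q ∈ M, p ≠ q →
      ¬ G.Adj p.1 q.1 ∧ ¬ G.Adj p.1 q.2 ∧ ¬ G.Adj p.2 q.1 ∧ ¬ G.Adj p.2 q.2)
    (hMS : ∀ p ∈ M, ∀ v ∈ S, ¬ G.Adj v p.1 ∧ ¬ G.Adj v p.2)
    (hSS : ∀ u ∈ S, ∀ v ∈ S, u ≠ v → ¬ G.Adj u v) {σ σ' : V → D}
    (hfix : ∀ k ∉ unitVertices M S, σ' k = σ k) :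
    globalCost G R σ' - globalCost G R σ =
      (∑ p ∈ M, (pairLocalCost G R p.1 p.2 σ' - pairLocalCost G R p.1 p.2 σ))
        + ∑ v ∈ S, (localCost G R v σ' - localCost G R v σ) := by
  set U := unitVertices M S
  set Δ : V → V → ℝ := fun i j => R i j (σ' i) (σ' j) - R i j (σ i) (σ j)
  have hΔ_symm : ∀ i j, Δ i j = Δ j i := fun i j => by simp only [Δ, hsym i j]
  have hΔ_eq_zero : ∀ i ∉ U, ∀ j ∉ U, Δ i j = 0 := fun i hi j hj => by
    simp only [Δ, hfix i hi, hfix j hj, sub_self]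
  have hsingleton : ∀ v ∈ S, 2 * ∑ j ∈ G.neighborFinset v, Δ v j
      - ∑ j ∈ G.neighborFinset v ∩ U, Δ v j = 2 * (localCost G R v σ' - localCost G R v σ) := by
    intro v hv
    rw [neighborFinset_inter_unitVertices_of_mem_singletons hMS hSS hv, sum_empty, sub_zero,
      localCost_sub_localCost]
  have hpair : ∀ p ∈ M, 2 * ∑ j ∈ G.neighborFinset p.1, Δ p.1 j
      - ∑ j ∈ G.neighborFinset p.1 ∩ U, Δ p.1 j
      + (2 * ∑ j ∈ G.neighborFinset p.2, Δ p.2 j - ∑ j ∈ G.neighborFinset p.2 ∩ U, Δ p.2 j) =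
      2 * (pairLocalCost G R p.1 p.2 σ' - pairLocalCost G R p.1 p.2 σ) := by
    intro p hp
    rw [neighborFinset_fst_inter_unitVertices hM hMS hMM hp,
      neighborFinset_snd_inter_unitVertices hM hMS hMM hp, sum_singleton, sum_singleton,
      pairLocalCost_eq G R (hM p hp), pairLocalCost_eq G R (hM p hp), ← localCost_sub_localCost,
      ← localCost_sub_localCost, hΔ_symm p.1 p.2]
    ring
  have h := two_mul_globalCost_sub_globalCost G R σ σ'
  rw [G.sum_sum_neighborFinset_eq_of_eq_zero U Δ hΔ_symm hΔ_eq_zero, sum_unitVertices hM hMS hMM,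
    sum_congr rfl hsingleton, sum_congr rfl hpair, ← mul_sum, ← mul_sum] at h
  linarith

theorem stmt16_general {V D : Type*} [Fintype V] [DecidableEq V] (G : SimpleGraph V)
    [DecidableRel G.Adj] (R : V → V → D → D → ℝ)
    (hsym : ∀ i j a b, R i j a b = R j i b a)
    (M : Finset (V × V)) (S : Finset V)
    (hM : ∀ p ∈ M, G.Adj p.1 p.2)
    (hMM : ∀ p ∈ M, ∀ q ∈ M, p ≠ q →
      ¬ G.Adj p.1 q.1 ∧ ¬ G.Adj p.1 q.2 ∧ ¬ G.Adj p.2 q.1 ∧ ¬ G.Adj p.2 q.2)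
    (hMS : ∀ p ∈ M, ∀ v ∈ S, ¬ G.Adj v p.1 ∧ ¬ G.Adj v p.2)
    (hSS : ∀ u ∈ S, ∀ v ∈ S, u ≠ v → ¬ G.Adj u v)
    (σ σ' : V → D)
    (hfix : ∀ k, k ∉ S → (∀ p ∈ M, k ≠ p.1 ∧ k ≠ p.2) → σ' k = σ k)
    (hMle : ∀ p ∈ M,
      pairLocalCost G R p.1 p.2 σ' ≤ pairLocalCost G R p.1 p.2 σ)
    (hSle : ∀ v ∈ S, localCost G R v σ' ≤ localCost G R v σ) :
    (globalCost G R σ' - globalCost G R σ =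
        (∑ p ∈ M, (pairLocalCost G R p.1 p.2 σ' - pairLocalCost G R p.1 p.2 σ))
          + ∑ v ∈ S, (localCost G R v σ' - localCost G R v σ)) ∧
      globalCost G R σ' ≤ globalCost G R σ ∧
      (((∃ p ∈ M, pairLocalCost G R p.1 p.2 σ' < pairLocalCost G R p.1 p.2 σ) ∨
          ∃ v ∈ S, localCost G R v σ' < localCost G R v σ) →
        globalCost G R σ' < globalCost G R σ) := by
  have hdecomp := globalCost_sub_globalCost_eq_sum_units hsym hM hMM hMS hSS fun k hk =>
    hfix k (notMem_unitVertices.1 hk).1 (notMem_unitVertices.1 hk).2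
  have hM_nonpos : ∀ p ∈ M, pairLocalCost G R p.1 p.2 σ' - pairLocalCost G R p.1 p.2 σ ≤ 0 :=
    fun p hp => sub_nonpos.2 (hMle p hp)
  have hS_nonpos : ∀ v ∈ S, localCost G R v σ' - localCost G R v σ ≤ 0 :=
    fun v hv => sub_nonpos.2 (hSle v hv)
  refine ⟨hdecomp, ?_, ?_⟩
  · linarith [sum_nonpos hM_nonpos, sum_nonpos hS_nonpos]
  · rintro (⟨p, hp, hlt⟩ | ⟨v, hv, hlt⟩)
    · linarith [sum_neg' hM_nonpos ⟨p, hp, sub_neg.2 hlt⟩, sum_nonpos hS_nonpos]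
    · linarith [sum_nonpos hM_nonpos, sum_neg' hS_nonpos ⟨v, hv, sub_neg.2 hlt⟩]

/-- if a set of updating units (matched pairs of `M` and
singletons of `S`) is pairwise non-adjacent, the updated assignment changes
only unit vertices, and each unit's local cost does not increase, then the
change in global cost equals the sum of the units' local changes, so the
global cost does not increase, and strictly decreases if some unit strictly
improves. -/
theorem stmt16 {V D : Type*} [Fintype V] [DecidableEq V] (G : SimpleGraph V)
    [DecidableRel G.Adj] (R : V → V → D → D → ℝ)
    (hsym : ∀ i j a b, R i j a b = R j i b a)
    (M : Finset (V × V)) (S : Finset V)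
    (hM : ∀ p ∈ M, G.Adj p.1 p.2)
    (hScover : ∀ v ∈ S, ∀ p ∈ M, v ≠ p.1 ∧ v ≠ p.2)
    (hmatch : ∀ p ∈ M, ∀ q ∈ M, p ≠ q →
      p.1 ≠ q.1 ∧ p.1 ≠ q.2 ∧ p.2 ≠ q.1 ∧ p.2 ≠ q.2)
    (hMM : ∀ p ∈ M, ∀ q ∈ M, p ≠ q →
      ¬ G.Adj p.1 q.1 ∧ ¬ G.Adj p.1 q.2 ∧ ¬ G.Adj p.2 q.1 ∧ ¬ G.Adj p.2 q.2)
    (hMS : ∀ p ∈ M, ∀ v ∈ S, ¬ G.Adj v p.1 ∧ ¬ G.Adj v p.2)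
    (hSS : ∀ u ∈ S, ∀ v ∈ S, u ≠ v → ¬ G.Adj u v)
    (σ σ' : V → D)
    (hfix : ∀ k, k ∉ S → (∀ p ∈ M, k ≠ p.1 ∧ k ≠ p.2) → σ' k = σ k)
    (hMle : ∀ p ∈ M,
      pairLocalCost G R p.1 p.2 σ' ≤ pairLocalCost G R p.1 p.2 σ)
    (hSle : ∀ v ∈ S, localCost G R v σ' ≤ localCost G R v σ) :
    (globalCost G R σ' - globalCost G R σ =
        (∑ p ∈ M, (pairLocalCost G R p.1 p.2 σ' - pairLocalCost G R p.1 p.2 σ))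
          + ∑ v ∈ S, (localCost G R v σ' - localCost G R v σ)) ∧
      globalCost G R σ' ≤ globalCost G R σ ∧
      (((∃ p ∈ M, pairLocalCost G R p.1 p.2 σ' < pairLocalCost G R p.1 p.2 σ) ∨
          ∃ v ∈ S, localCost G R v σ' < localCost G R v σ) →
        globalCost G R σ' < globalCost G R σ) :=
  stmt16_general G R hsym M S hM hMM hMS hSS σ σ' hfix hMle hSle
end

section
/- In the LAMDLS-2 counter model on a finite graph with a proper coloring, at any reachable system state the counters of any two adjacent vertices differ by at most 1, and if co(u) < co(v) for adjacent u, v then sc(u) ≥ sc(v) at all times. -/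
/-- One transition of the LAMDLS-2 counter model: some vertex `v` whose
replacement precondition holds (all smaller-colored neighbors at `sc v + 1`,
all larger-colored neighbors at `sc v`) increments its counter by one; all
other counters are unchanged. -/
def CounterStep {V : Type*} [DecidableEq V] (G : SimpleGraph V) (co : V → ℕ)
    (sc sc' : V → ℕ) : Prop :=
  ∃ v,
    (∀ u, G.Adj u v → co u < co v → sc u = sc v + 1) ∧
    (∀ u, G.Adj u v → co v < co u → sc u = sc v) ∧
    sc' = Function.update sc v (sc v + 1)

/-- The invariant: along every edge, the smaller-colored endpoint's counter is
at least the larger-colored endpoint's counter and exceeds it by at most one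
(hence counters of adjacent vertices differ by at most 1). -/
def CounterInv {V : Type*} (G : SimpleGraph V) (co : V → ℕ) (sc : V → ℕ) : Prop :=
  ∀ u v, G.Adj u v → co u < co v → sc v ≤ sc u ∧ sc u ≤ sc v + 1

/-- in the LAMDLS-2 counter model with a proper coloring, the
invariant holds in the initial state (all counters 1) and is preserved by every
transition; in particular adjacent counters always differ by at most 1, and the
smaller-colored endpoint is always ahead. -/
theorem stmt17 {V : Type*} [DecidableEq V] (G : SimpleGraph V) (co : V → ℕ)
    (hproper : ∀ u v, G.Adj u v → co u ≠ co v) :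
    CounterInv G co (fun _ => 1) ∧
      ∀ sc sc' : V → ℕ, CounterInv G co sc → CounterStep G co sc sc' →
        CounterInv G co sc' := by
  constructor
  · intro u v _ _; simp
  · rintro sc sc' hinv ⟨w, hlo, hhi, rfl⟩ u v huv hco
    have h := hinv u v huv hco
    by_cases hu : u = w
    · subst hu
      by_cases hv : v = u
      · subst hv; simp
      · simp [Function.update_apply, hv]
        have := hhi v huv.symm hco
        omega
    · by_cases hv : v = w
      · subst hv
        simp [Function.update_apply, hu]
        have := hlo u huv hco
        omega
      · simp [Function.update_apply, hu, hv]; exact h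
end
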